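/- arXiv:1809.04778 — 5 statements merged into one kernel-verified Lean document; each statement's English description precedes it below -/
import Mathlib

section
/- Let X be a finite-dimensional real Banach space and T a bounded linear operator on X. Then the numerical radius v(T) = sup{|x*(Tx)| : x ∈ S_X, x* ∈ S_{X*}, x*(x) = 1} equals sup{|x*(Tx)| : x ∈ ext B_X, x* ∈ ext B_{X*}, x*(x) = 1}. -/
open Metric Set

lemma key_step {E : Type*} [NormedAddCommGroup E] [NormedSpace ℝ E] [FiniteDimensional ℝ E]
    {A : Set E} (hA : IsCompact A) (hconv : Convex ℝ A) (l φ : E →L[ℝ] ℝ) {x : E} (hx : x ∈ A)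
    (hface : ∀ y ∈ A, l y ≤ l x) :
    ∃ z ∈ A.extremePoints ℝ, l z = l x ∧ φ x ≤ φ z := by
  set F : Set E := {y ∈ A | ∀ w ∈ A, l w ≤ l y} with hF
  have hFexp : IsExposed ℝ A F := fun _ => ⟨l, rfl⟩
  have hxF : x ∈ F := ⟨hx, hface⟩
  have hFcomp : IsCompact F := hFexp.isCompact hA
  have hFconv : Convex ℝ F := hFexp.convex hconv
  set G : Set E := {y ∈ F | ∀ w ∈ F, φ w ≤ φ y} with hG
  have hGexp : IsExposed ℝ F G := fun _ => ⟨φ, rfl⟩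
  obtain ⟨y, hyF, hymax⟩ := hFcomp.exists_isMaxOn ⟨x, hxF⟩ φ.continuous.continuousOn
  have hyG : y ∈ G := ⟨hyF, fun w hw => hymax hw⟩
  have hGcomp : IsCompact G := hGexp.isCompact hFcomp
  have hGconv : Convex ℝ G := hGexp.convex hFconv
  obtain ⟨z, hz⟩ := hGcomp.extremePoints_nonempty ⟨y, hyG⟩
  have hzA : z ∈ A.extremePoints ℝ :=
    (hFexp.isExtreme.trans hGexp.isExtreme).extremePoints_subset_extremePoints hz
  obtain ⟨⟨hzA', hzFmax⟩, hzφmax⟩ := (extremePoints_subset hz : z ∈ G)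
  exact ⟨z, hzA, le_antisymm (hface z hzA') (hzFmax x hx), hzφmax x hxF⟩

lemma abs_sign_trick (a : ℝ) : |a| = (if 0 ≤ a then (1:ℝ) else -1) * a := by
  split <;> simp_all [abs_of_nonneg, abs_of_neg, lt_of_not_ge]

lemma sign_mul_le_abs (a b : ℝ) : (if 0 ≤ a then (1:ℝ) else -1) * b ≤ |b| := by
  split <;> simp [neg_le_abs, le_abs_self]

theorem stmt_4 {X : Type*} [NormedAddCommGroup X] [NormedSpace ℝ X] [FiniteDimensional ℝ X]
    (T : X →L[ℝ] X) :
    sSup {r : ℝ | ∃ x : X, ∃ f : X →L[ℝ] ℝ, ‖x‖ = 1 ∧ ‖f‖ = 1 ∧ f x = 1 ∧ r = |f (T x)|} =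
    sSup {r : ℝ | ∃ x : X, ∃ f : X →L[ℝ] ℝ,
      x ∈ Set.extremePoints ℝ (closedBall (0 : X) 1) ∧
      f ∈ Set.extremePoints ℝ (closedBall (0 : X →L[ℝ] ℝ) 1) ∧
      f x = 1 ∧ r = |f (T x)|} := by
  set S₁ : Set ℝ :=
    {r : ℝ | ∃ x : X, ∃ f : X →L[ℝ] ℝ, ‖x‖ = 1 ∧ ‖f‖ = 1 ∧ f x = 1 ∧ r = |f (T x)|} with hS₁
  set S₂ : Set ℝ := {r : ℝ | ∃ x : X, ∃ f : X →L[ℝ] ℝ,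
      x ∈ Set.extremePoints ℝ (closedBall (0 : X) 1) ∧
      f ∈ Set.extremePoints ℝ (closedBall (0 : X →L[ℝ] ℝ) 1) ∧
      f x = 1 ∧ r = |f (T x)|} with hS₂
  -- boundedness
  have hbound : ∀ (x : X) (f : X →L[ℝ] ℝ), ‖x‖ ≤ 1 → ‖f‖ ≤ 1 → |f (T x)| ≤ ‖T‖ := by
    intro x f hx hf
    calc |f (T x)| = ‖f (T x)‖ := rfl
      _ ≤ ‖f‖ * ‖T x‖ := f.le_opNorm _
      _ ≤ 1 * (‖T‖ * ‖x‖) := by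
          exact mul_le_mul hf (T.le_opNorm x) (norm_nonneg _) zero_le_one
      _ ≤ 1 * (‖T‖ * 1) := by
          have := mul_le_mul_of_nonneg_left hx (norm_nonneg T)
          linarith
      _ = ‖T‖ := by ring
  have hbdd₁ : BddAbove S₁ := by
    refine ⟨‖T‖, fun r hr => ?_⟩
    obtain ⟨x, f, hx, hf, _, rfl⟩ := hr
    exact hbound x f hx.le hf.le
  have hbdd₂ : BddAbove S₂ := by
    refine ⟨‖T‖, fun r hr => ?_⟩
    obtain ⟨x, f, hx, hf, _, rfl⟩ := hr
    exact hbound x f (mem_closedBall_zero_iff.1 (extremePoints_subset hx))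
      (mem_closedBall_zero_iff.1 (extremePoints_subset hf))
  -- S₂ ⊆ S₁
  have hsub : S₂ ⊆ S₁ := by
    rintro r ⟨x, f, hx, hf, hfx, rfl⟩
    have hx1 : ‖x‖ ≤ 1 := mem_closedBall_zero_iff.1 (extremePoints_subset hx)
    have hf1 : ‖f‖ ≤ 1 := mem_closedBall_zero_iff.1 (extremePoints_subset hf)
    have h1 : (1:ℝ) ≤ ‖f‖ * ‖x‖ := by
      calc (1:ℝ) = ‖f x‖ := by rw [hfx]; simp
        _ ≤ ‖f‖ * ‖x‖ := f.le_opNorm x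
    have hxn : ‖x‖ = 1 := by
      refine le_antisymm hx1 ?_
      nlinarith [norm_nonneg f, norm_nonneg x]
    have hfn : ‖f‖ = 1 := by
      refine le_antisymm hf1 ?_
      nlinarith [norm_nonneg f, norm_nonneg x]
    exact ⟨x, f, hxn, hfn, hfx, rfl⟩
  -- hard direction pointwise
  have hmain : ∀ r ∈ S₁, ∃ s ∈ S₂, r ≤ s := by
    rintro r ⟨x, f, hx, hf, hfx, rfl⟩
    -- Step 1: optimize over the dual ball
    have hAcomp : IsCompact (closedBall (0 : X →L[ℝ] ℝ) 1) := isCompact_closedBall _ _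
    have hAconv : Convex ℝ (closedBall (0 : X →L[ℝ] ℝ) 1) := convex_closedBall _ _
    set ε : ℝ := if 0 ≤ f (T x) then 1 else -1 with hε
    have hfball : f ∈ closedBall (0 : X →L[ℝ] ℝ) 1 := by
      rw [mem_closedBall_zero_iff, hf]
    obtain ⟨g, hgext, hgx, hgT⟩ := key_step hAcomp hAconv
      (ContinuousLinearMap.apply ℝ ℝ x) (ε • ContinuousLinearMap.apply ℝ ℝ (T x)) hfball
      (fun h hh => by
        simp only [ContinuousLinearMap.apply_apply, hfx]
        calc h x ≤ ‖h x‖ := le_abs_self _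
          _ ≤ ‖h‖ * ‖x‖ := h.le_opNorm x
          _ ≤ 1 * 1 := mul_le_mul (mem_closedBall_zero_iff.1 hh) hx.le (norm_nonneg _)
              zero_le_one
          _ = 1 := one_mul 1)
    simp only [ContinuousLinearMap.apply_apply, ContinuousLinearMap.smul_apply,
      smul_eq_mul] at hgx hgT
    rw [hfx] at hgx
    have step1 : |f (T x)| ≤ |g (T x)| := by
      calc |f (T x)| = ε * f (T x) := abs_sign_trick _
        _ ≤ ε * g (T x) := hgT
        _ ≤ |g (T x)| := sign_mul_le_abs _ _
    -- Step 2: optimize over the primal ball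
    have hBcomp : IsCompact (closedBall (0 : X) 1) := isCompact_closedBall _ _
    have hBconv : Convex ℝ (closedBall (0 : X) 1) := convex_closedBall _ _
    set δ : ℝ := if 0 ≤ g (T x) then 1 else -1 with hδ
    have hg1 : ‖g‖ ≤ 1 := mem_closedBall_zero_iff.1 (extremePoints_subset hgext)
    have hxball : x ∈ closedBall (0 : X) 1 := by rw [mem_closedBall_zero_iff, hx]
    obtain ⟨y, hyext, hyx, hyT⟩ := key_step hBcomp hBconv g (δ • g.comp T) hxball
      (fun w hw => by
        rw [hgx]
        calc g w ≤ ‖g w‖ := le_abs_self _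
          _ ≤ ‖g‖ * ‖w‖ := g.le_opNorm w
          _ ≤ 1 * 1 := mul_le_mul hg1 (mem_closedBall_zero_iff.1 hw) (norm_nonneg _)
              zero_le_one
          _ = 1 := one_mul 1)
    simp only [ContinuousLinearMap.smul_apply, ContinuousLinearMap.comp_apply,
      smul_eq_mul] at hyT
    rw [hgx] at hyx
    have step2 : |g (T x)| ≤ |g (T y)| := by
      calc |g (T x)| = δ * g (T x) := abs_sign_trick _
        _ ≤ δ * g (T y) := hyT
        _ ≤ |g (T y)| := sign_mul_le_abs _ _
    exact ⟨|g (T y)|, ⟨y, g, hyext, hgext, hyx, rfl⟩, step1.trans step2⟩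
  -- conclude
  have h0₂ : 0 ≤ sSup S₂ := by
    rcases eq_empty_or_nonempty S₂ with h | ⟨s, hs⟩
    · simp [h, Real.sSup_empty]
    · have hle := le_csSup hbdd₂ hs
      obtain ⟨_, _, _, _, _, rfl⟩ := hs
      exact le_trans (abs_nonneg _) hle
  have h0₁ : 0 ≤ sSup S₁ := by
    rcases eq_empty_or_nonempty S₁ with h | ⟨s, hs⟩
    · simp [h, Real.sSup_empty]
    · have hle := le_csSup hbdd₁ hs
      obtain ⟨_, _, _, _, _, rfl⟩ := hs
      exact le_trans (abs_nonneg _) hle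
  refine le_antisymm ?_ ?_
  · refine Real.sSup_le (fun r hr => ?_) h0₂
    obtain ⟨s, hs, hrs⟩ := hmain r hr
    exact hrs.trans (le_csSup hbdd₂ hs)
  · exact Real.sSup_le (fun r hr => le_csSup hbdd₁ (hsub hr)) h0₁
end

section
/- Let X = R² with the norm whose unit ball is the hexagon with vertices ±(1,1), ±(1/2,2), ±(−1,1). Then the numerical index of X satisfies n(X) ≥ 5/17. -/
open Metric Set

/-- The numerical radius of a bounded linear operator. -/
noncomputable def nrad {X : Type*} [NormedAddCommGroup X] [NormedSpace ℝ X]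
    (T : X →L[ℝ] X) : ℝ :=
  sSup {r : ℝ | ∃ x : X, ∃ f : X →L[ℝ] ℝ, ‖x‖ = 1 ∧ ‖f‖ = 1 ∧ f x = 1 ∧ r = |f (T x)|}

/-- The numerical index of a normed space. -/
noncomputable def nindex (X : Type*) [NormedAddCommGroup X] [NormedSpace ℝ X] : ℝ :=
  sInf {r : ℝ | ∃ T : X →L[ℝ] X, ‖T‖ = 1 ∧ r = nrad T}

/-- Vertices of the hexagon ±(1,1), ±(1/2,2), ±(−1,1). -/
def hexVerts : Set (Fin 2 → ℝ) :=
  {![1, 1], ![1/2, 2], ![-1, 1], ![-1, -1], ![-(1/2), -2], ![1, -1]}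

/-!
At each vertex `v` of the unit hexagon two of the facet functionals `f ∈ {±x, ±(2x + y)/3,
±(-2x + 3y)/5}` take the value `1`, so the six numbers `|f (T v)|` (for `v` among `(1, 1)`,
`(1/2, 2)`, `(-1, 1)`) are bounded by the numerical radius `v(T)`. The linear relations between
the three vertices and between the three functionals bound every other `|f (T v)|` by at most
`17/5 · v(T)`. As the operator norm is attained at a vertex of the unit ball, `‖T‖ ≤ 17/5 · v(T)`.
-/

section NumericalRadius

variable {X : Type*} [NormedAddCommGroup X] [NormedSpace ℝ X]

lemma bddAbove_abs_numericalRange (T : X →L[ℝ] X) :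
    BddAbove {r : ℝ | ∃ x : X, ∃ f : X →L[ℝ] ℝ, ‖x‖ = 1 ∧ ‖f‖ = 1 ∧ f x = 1 ∧ r = |f (T x)|} := by
  refine ⟨‖T‖, ?_⟩
  rintro r ⟨x, f, hx, hf, -, rfl⟩
  calc |f (T x)| = ‖f (T x)‖ := (Real.norm_eq_abs _).symm
    _ ≤ ‖f‖ * (‖T‖ * ‖x‖) := f.le_opNorm_of_le (T.le_opNorm x)
    _ = ‖T‖ := by rw [hf, hx, one_mul, mul_one]

lemma abs_apply_le_nrad (T : X →L[ℝ] X) (f : X →ₗ[ℝ] ℝ) (hf : ∀ y, |f y| ≤ ‖y‖) {x : X}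
    (hx : ‖x‖ ≤ 1) (hfx : f x = 1) : |f (T x)| ≤ nrad T := by
  set g := f.mkContinuous 1 fun y => by simpa using hf y
  have hg : ‖g‖ ≤ 1 := f.mkContinuous_norm_le zero_le_one _
  have hgx : 1 ≤ ‖g‖ * ‖x‖ := by simpa [g, hfx] using g.le_opNorm x
  have hx1 : ‖x‖ = 1 := by nlinarith [norm_nonneg g, norm_nonneg x]
  have hg1 : ‖g‖ = 1 := by nlinarith [norm_nonneg g, norm_nonneg x]
  exact le_csSup (bddAbove_abs_numericalRange T) ⟨x, g, hx1, hg1, hfx, rfl⟩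

lemma le_nindex [Nontrivial X] {c : ℝ} (h : ∀ T : X →L[ℝ] X, ‖T‖ = 1 → c ≤ nrad T) :
    c ≤ nindex X :=
  le_csInf ⟨_, _, ContinuousLinearMap.norm_id, rfl⟩ fun _ ⟨T, hT, hr⟩ => hr ▸ h T hT

end NumericalRadius

lemma ContinuousLinearMap.opNorm_le_of_closedBall_subset_convexHull
    {X Y : Type*} [NormedAddCommGroup X] [NormedSpace ℝ X] [NormedAddCommGroup Y]
    [NormedSpace ℝ Y] {S : Set X} (hS : closedBall (0 : X) 1 ⊆ convexHull ℝ S)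
    (T : X →L[ℝ] Y) {C : ℝ} (hC : 0 ≤ C) (hT : ∀ v ∈ S, ‖T v‖ ≤ C) : ‖T‖ ≤ C := by
  refine T.opNorm_le_of_unit_norm hC fun x hx => ?_
  have hconv : Convex ℝ (T ⁻¹' closedBall 0 C) :=
    (convex_closedBall 0 C).linear_preimage T.toLinearMap
  have hx' : x ∈ convexHull ℝ S := hS (mem_closedBall_zero_iff.2 hx.le)
  have := convexHull_min (t := T ⁻¹' closedBall 0 C)
    (fun v hv => mem_closedBall_zero_iff.2 (hT v hv)) hconv hx'
  simpa using this

lemma Seminorm.le_of_closedBall_subset {E : Type*} [AddCommGroup E] [Module ℝ E]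
    {p q : Seminorm ℝ E} (h : p.closedBall 0 1 ⊆ q.closedBall 0 1) : q ≤ p := by
  intro x
  refine le_of_forall_gt_imp_ge_of_dense fun r hr => ?_
  have hr0 : 0 < r := (apply_nonneg p x).trans_lt hr
  have hscale : ∀ s : Seminorm ℝ E, s (r⁻¹ • x) = r⁻¹ * s x := fun s => by
    rw [map_smul_eq_mul, Real.norm_eq_abs, abs_inv, abs_of_pos hr0]
  have hmem : r⁻¹ • x ∈ p.closedBall 0 1 := by
    rw [Seminorm.mem_closedBall_zero, hscale, inv_mul_le_one₀ hr0]
    exact hr.le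
  have := (q.mem_closedBall_zero).1 (h hmem)
  rwa [hscale, inv_mul_le_one₀ hr0] at this

lemma Seminorm.ext_closedBall {E : Type*} [AddCommGroup E] [Module ℝ E]
    {p q : Seminorm ℝ E} (h : p.closedBall 0 1 = q.closedBall 0 1) : p = q :=
  le_antisymm (le_of_closedBall_subset h.ge) (le_of_closedBall_subset h.le)

def linComb (a b : ℝ) : (Fin 2 → ℝ) →ₗ[ℝ] ℝ := a • LinearMap.proj 0 + b • LinearMap.proj 1

@[simp]
lemma linComb_apply (a b : ℝ) (u : Fin 2 → ℝ) : linComb a b u = a * u 0 + b * u 1 := rfl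

-- The edges of the hexagon lie on the lines x = ±1, 2x + y = ±3 and -2x + 3y = ±5.
noncomputable def hexSeminorm : Seminorm ℝ (Fin 2 → ℝ) :=
  (normSeminorm ℝ ℝ).comp (linComb 1 0) ⊔
    ((normSeminorm ℝ ℝ).comp (linComb (2/3) (1/3)) ⊔
      (normSeminorm ℝ ℝ).comp (linComb (-2/5) (3/5)))

lemma hexSeminorm_apply (u : Fin 2 → ℝ) :
    hexSeminorm u = max |u 0| (max |2/3 * u 0 + 1/3 * u 1| |-2/5 * u 0 + 3/5 * u 1|) := by
  simp [hexSeminorm]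

lemma smul_add_smul_add_smul_mem_convexHull {E : Type*} [AddCommGroup E] [Module ℝ E]
    {s : Set E} {a b c : E} (ha : a ∈ s) (hb : b ∈ s) (hc : c ∈ s) {α β γ : ℝ} (hα : 0 ≤ α)
    (hβ : 0 ≤ β) (hγ : 0 ≤ γ) (hsum : α + β + γ = 1) :
    α • a + β • b + γ • c ∈ convexHull ℝ s := by
  have := (convex_convexHull ℝ s).sum_mem (t := Finset.univ) (w := ![α, β, γ])
    (z := ![a, b, c]) (by simp [Fin.forall_fin_succ, hα, hβ, hγ])
    (by simp [Fin.sum_univ_three, hsum])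
    (by simp [Fin.forall_fin_succ, subset_convexHull ℝ s ha, subset_convexHull ℝ s hb,
      subset_convexHull ℝ s hc])
  simpa [Fin.sum_univ_three, add_assoc] using this

lemma convexHull_hexVerts : convexHull ℝ hexVerts = hexSeminorm.closedBall 0 1 := by
  refine (convexHull_min ?_ (hexSeminorm.convex_closedBall 0 1)).antisymm ?_
  · intro v hv
    simp only [hexVerts, mem_insert_iff, mem_singleton_iff] at hv
    rw [Seminorm.mem_closedBall_zero, hexSeminorm_apply]
    rcases hv with rfl | rfl | rfl | rfl | rfl | rfl <;> norm_num [abs_le]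
  intro u hu
  rw [Seminorm.mem_closedBall_zero, hexSeminorm_apply, max_le_iff, max_le_iff, abs_le, abs_le,
    abs_le] at hu
  have m₁ : ![1, 1] ∈ hexVerts := by simp [hexVerts]
  have m₂ : ![1/2, 2] ∈ hexVerts := by simp [hexVerts]
  have m₃ : ![-1, 1] ∈ hexVerts := by simp [hexVerts]
  have m₄ : ![-1, -1] ∈ hexVerts := by simp [hexVerts]
  have m₅ : ![-(1/2), -2] ∈ hexVerts := by simp [hexVerts]
  have m₆ : ![1, -1] ∈ hexVerts := by simp [hexVerts]
  -- Triangulate the hexagon by the fan of triangles at the vertex (1, 1).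
  rcases le_or_gt 1 (u 1) with h₁ | h₁
  · convert smul_add_smul_add_smul_mem_convexHull m₁ m₂ m₃
      (α := (2 * u 0 - 3 * u 1 + 5) / 4) (β := u 1 - 1) (γ := (3 - 2 * u 0 - u 1) / 4)
      (by linarith) (by linarith) (by linarith) (by ring) using 1
    ext i; fin_cases i <;> simp <;> ring
  rcases le_or_gt (u 0) (u 1) with h₂ | h₂
  · convert smul_add_smul_add_smul_mem_convexHull m₁ m₃ m₄
      (α := (1 + u 0) / 2) (β := (u 1 - u 0) / 2) (γ := (1 - u 1) / 2)
      (by linarith) (by linarith) (by linarith) (by ring) using 1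
    ext i; fin_cases i <;> simp <;> ring
  rcases le_or_gt (2 * u 0 - 1) (u 1) with h₃ | h₃
  · convert smul_add_smul_add_smul_mem_convexHull m₁ m₄ m₅
      (α := (3 + 2 * u 0 + u 1) / 6) (β := (1 - 2 * u 0 + u 1) / 2) (γ := 2 * (u 0 - u 1) / 3)
      (by linarith) (by linarith) (by linarith) (by ring) using 1
    ext i; fin_cases i <;> simp <;> ring
  · convert smul_add_smul_add_smul_mem_convexHull m₁ m₅ m₆
      (α := (3 * u 1 + 5 - 2 * u 0) / 6) (β := 2 * (1 - u 0) / 3) (γ := (2 * u 0 - u 1 - 1) / 2)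
      (by linarith) (by linarith) (by linarith) (by ring) using 1
    ext i; fin_cases i <;> simp <;> ring

/-- The bound `17/5` comes from `(1/2, 2) = 5/4 • (1, 1) + 3/4 • (-1, 1)` and
`-2/5 x + 3/5 y = 9/5 (2/3 x + 1/3 y) - 8/5 x`, evaluated at the image of `(1, 1)`. -/
lemma hexSeminorm_map_le_of_vertex_bounds (Φ : (Fin 2 → ℝ) →ₗ[ℝ] (Fin 2 → ℝ)) {w : ℝ}
    (h₁ : |linComb 1 0 (Φ ![1, 1])| ≤ w) (h₂ : |linComb (2/3) (1/3) (Φ ![1, 1])| ≤ w)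
    (h₃ : |linComb (2/3) (1/3) (Φ ![1/2, 2])| ≤ w)
    (h₄ : |linComb (-2/5) (3/5) (Φ ![1/2, 2])| ≤ w)
    (h₅ : |linComb (-2/5) (3/5) (Φ ![-1, 1])| ≤ w) (h₆ : |linComb (-1) 0 (Φ ![-1, 1])| ≤ w) :
    ∀ v ∈ hexVerts, hexSeminorm (Φ v) ≤ 17/5 * w := by
  have hmid : Φ ![1/2, 2] = (5/4 : ℝ) • Φ ![1, 1] + (3/4 : ℝ) • Φ ![-1, 1] := by
    rw [← map_smul, ← map_smul, ← map_add]
    congr 1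
    ext i; fin_cases i <;> norm_num
  have hmid₀ := congrFun hmid 0
  have hmid₁ := congrFun hmid 1
  simp only [linComb_apply, abs_le, Pi.add_apply, Pi.smul_apply, smul_eq_mul]
    at h₁ h₂ h₃ h₄ h₅ h₆ hmid₀ hmid₁
  have hneg : ∀ v : Fin 2 → ℝ, hexSeminorm (Φ (-v)) = hexSeminorm (Φ v) := fun v => by
    rw [map_neg, map_neg_eq_map]
  have key : hexSeminorm (Φ ![1, 1]) ≤ 17/5 * w ∧ hexSeminorm (Φ ![1/2, 2]) ≤ 17/5 * w ∧
      hexSeminorm (Φ ![-1, 1]) ≤ 17/5 * w := by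
    simp only [hexSeminorm_apply, max_le_iff, abs_le]
    refine ⟨⟨⟨?_, ?_⟩, ⟨?_, ?_⟩, ?_, ?_⟩, ⟨⟨?_, ?_⟩, ⟨?_, ?_⟩, ?_, ?_⟩,
      ⟨⟨?_, ?_⟩, ⟨?_, ?_⟩, ?_, ?_⟩⟩ <;> linarith
  intro v hv
  simp only [hexVerts, mem_insert_iff, mem_singleton_iff] at hv
  rcases hv with rfl | rfl | rfl | rfl | rfl | rfl
  · exact key.1
  · exact key.2.1
  · exact key.2.2
  · rw [show (![-1, -1] : Fin 2 → ℝ) = -![1, 1] by ext i; fin_cases i <;> simp, hneg]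
    exact key.1
  · rw [show (![-(1/2), -2] : Fin 2 → ℝ) = -![1/2, 2] by ext i; fin_cases i <;> simp, hneg]
    exact key.2.1
  · rw [show (![1, -1] : Fin 2 → ℝ) = -![-1, 1] by ext i; fin_cases i <;> simp, hneg]
    exact key.2.2

section HexagonalNorm

variable {X : Type*} [NormedAddCommGroup X] [NormedSpace ℝ X] (e : X ≃ₗ[ℝ] (Fin 2 → ℝ))

lemma norm_eq_hexSeminorm (hball : closedBall (0 : X) 1 = e ⁻¹' (convexHull ℝ hexVerts))
    (x : X) : ‖x‖ = hexSeminorm (e x) := by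
  have h : (normSeminorm ℝ X).closedBall 0 1 =
      (hexSeminorm.comp e.toLinearMap).closedBall 0 1 := by
    rw [closedBall_normSeminorm, hball, Seminorm.closedBall_comp, map_zero, convexHull_hexVerts]
    rfl
  exact DFunLike.congr_fun (Seminorm.ext_closedBall h) x

lemma abs_linComb_le_nrad (hball : closedBall (0 : X) 1 = e ⁻¹' (convexHull ℝ hexVerts))
    (T : X →L[ℝ] X) {a b : ℝ} (hab : ∀ u, |linComb a b u| ≤ hexSeminorm u)
    {v : Fin 2 → ℝ} (hv : hexSeminorm v ≤ 1)
    (habv : linComb a b v = 1) : |linComb a b (e (T (e.symm v)))| ≤ nrad T := by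
  have hnorm := norm_eq_hexSeminorm e hball
  exact abs_apply_le_nrad T (linComb a b ∘ₗ e.toLinearMap)
    (fun y => (hab (e y)).trans_eq (hnorm y).symm) (by rwa [hnorm, e.apply_symm_apply])
    (by simpa using habv)

lemma norm_le_mul_nrad (hball : closedBall (0 : X) 1 = e ⁻¹' (convexHull ℝ hexVerts))
    (T : X →L[ℝ] X) : ‖T‖ ≤ 17/5 * nrad T := by
  have hℓ₁ : ∀ u, |linComb 1 0 u| ≤ hexSeminorm u := by simp [hexSeminorm_apply]
  have hℓ₁' : ∀ u, |linComb (-1) 0 u| ≤ hexSeminorm u := by simp [hexSeminorm_apply]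
  have hℓ₂ : ∀ u, |linComb (2/3) (1/3) u| ≤ hexSeminorm u := by simp [hexSeminorm_apply]
  have hℓ₃ : ∀ u, |linComb (-2/5) (3/5) u| ≤ hexSeminorm u := by simp [hexSeminorm_apply]
  have h₁ := abs_linComb_le_nrad e hball T hℓ₁ (v := ![1, 1])
    (by norm_num [hexSeminorm_apply]) (by norm_num)
  have hvert := hexSeminorm_map_le_of_vertex_bounds
    (e.toLinearMap ∘ₗ T.toLinearMap ∘ₗ e.symm.toLinearMap) h₁
    (abs_linComb_le_nrad e hball T hℓ₂ (v := ![1, 1]) (by norm_num [hexSeminorm_apply])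
      (by norm_num))
    (abs_linComb_le_nrad e hball T hℓ₂ (v := ![1/2, 2]) (by norm_num [hexSeminorm_apply])
      (by norm_num))
    (abs_linComb_le_nrad e hball T hℓ₃ (v := ![1/2, 2]) (by norm_num [hexSeminorm_apply])
      (by norm_num))
    (abs_linComb_le_nrad e hball T hℓ₃ (v := ![-1, 1]) (by norm_num [hexSeminorm_apply])
      (by norm_num))
    (abs_linComb_le_nrad e hball T hℓ₁' (v := ![-1, 1]) (by norm_num [hexSeminorm_apply])
      (by norm_num))
  have hnrad : 0 ≤ nrad T := (abs_nonneg _).trans h₁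
  refine T.opNorm_le_of_closedBall_subset_convexHull (S := e.symm '' hexVerts) ?_
    (by positivity) ?_
  · rw [hball, ← e.image_symm_eq_preimage]
    exact (e.symm.toLinearMap.image_convexHull hexVerts).le
  · rintro _ ⟨v, hv, rfl⟩
    rw [norm_eq_hexSeminorm e hball]
    exact hvert v hv

end HexagonalNorm

theorem stmt_5 {X : Type*} [NormedAddCommGroup X] [NormedSpace ℝ X]
    (e : X ≃ₗ[ℝ] (Fin 2 → ℝ))
    (hball : closedBall (0 : X) 1 = e ⁻¹' (convexHull ℝ hexVerts)) :
    nindex X ≥ 5 / 17 := by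
  have : Nontrivial X := e.toEquiv.nontrivial
  refine le_nindex fun T hT => ?_
  have := norm_le_mul_nrad e hball T
  linarith
end

section
/- Let X = R² with the norm whose unit ball is the hexagon with vertices ±(1,1), ±(1/2,2), ±(−1,1). For the supporting functionals f₁(α,β) = (2/3)α + (1/3)β and f₂(α,β) = α corresponding to the two edges meeting at the vertex (1,1), one has max{|f₁(x)|, |f₂(x)|} ≥ 5/17 for every x on the unit sphere of X. -/
open Metric Set

/-! The constant 5/17 comes from one linear identity: the three pairs of edges of the hexagon
lie on the lines `|α| = 1`, `|2α + β| = 3`, `|-2α + 3β| = 5`, and `-2α + 3β = 9 f₁ - 8 f₂`, so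
`|f₁|, |f₂| < 5/17` forces every edge functional below its bound. Such a point lies strictly
inside the hexagon, i.e. strictly inside the unit ball. -/

lemma Convex.smul_add_smul_add_smul_mem {E : Type*} [AddCommGroup E] [Module ℝ E] {s : Set E}
    (hs : Convex ℝ s) {u v w : E} (hu : u ∈ s) (hv : v ∈ s) (hw : w ∈ s) {a b c : ℝ}
    (ha : 0 ≤ a) (hb : 0 ≤ b) (hc : 0 ≤ c) (habc : a + b + c = 1) :
    a • u + b • v + c • w ∈ s := by
  have := hs.sum_mem (t := Finset.univ) (w := ![a, b, c]) (z := ![u, v, w])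
    (by intro i _; fin_cases i <;> simpa) (by simp [Fin.sum_univ_three, habc])
    (by intro i _; fin_cases i <;> simpa)
  simpa [Fin.sum_univ_three] using this

/-- The Minkowski functional of the hexagon: the largest of its three edge functionals. -/
noncomputable def hexGauge (p : Fin 2 → ℝ) : ℝ :=
  max |p 0| (max (|2 * p 0 + p 1| / 3) (|-2 * p 0 + 3 * p 1| / 5))

lemma hexGauge_smul {c : ℝ} (hc : 0 ≤ c) (p : Fin 2 → ℝ) :
    hexGauge (c • p) = c * hexGauge p := by
  have habs : ∀ t : ℝ, |c * t| = c * |t| := fun t => by rw [abs_mul, abs_of_nonneg hc]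
  simp only [hexGauge, Pi.smul_apply, smul_eq_mul, mul_max_of_nonneg _ _ hc]
  rw [show 2 * (c * p 0) + c * p 1 = c * (2 * p 0 + p 1) by ring,
    show -2 * (c * p 0) + 3 * (c * p 1) = c * (-2 * p 0 + 3 * p 1) by ring,
    habs, habs, habs, mul_div_assoc, mul_div_assoc]

lemma mem_convexHull_hexVerts_of_hexGauge_le_one {p : Fin 2 → ℝ} (hp : hexGauge p ≤ 1) :
    p ∈ convexHull ℝ hexVerts := by
  simp only [hexGauge, max_le_iff, div_le_one (by norm_num : (0 : ℝ) < 3),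
    div_le_one (by norm_num : (0 : ℝ) < 5), abs_le] at hp
  obtain ⟨⟨h₁, h₂⟩, ⟨h₃, h₄⟩, h₅, h₆⟩ := hp
  have hull : ∀ {u v w : Fin 2 → ℝ}, u ∈ hexVerts → v ∈ hexVerts → w ∈ hexVerts →
      ∀ {a b c : ℝ}, 0 ≤ a → 0 ≤ b → 0 ≤ c → a + b + c = 1 →
      a • u + b • v + c • w ∈ convexHull ℝ hexVerts := fun hu hv hw =>
    (convex_convexHull ℝ hexVerts).smul_add_smul_add_smul_mem
      (subset_convexHull ℝ _ hu) (subset_convexHull ℝ _ hv) (subset_convexHull ℝ _ hw)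
  have coords : ∀ q : Fin 2 → ℝ, q 0 = p 0 → q 1 = p 1 → q = p := fun q h0 h1 => by
    ext i; fin_cases i <;> assumption
  -- Split the hexagon into the triangles cut off at (1/2,2) and at -(1/2,2), and the square between.
  rcases le_or_gt 1 (p 1) with htop | hlow
  · convert hull (u := ![1, 1]) (v := ![1/2, 2]) (w := ![-1, 1]) (by simp [hexVerts])
      (by simp [hexVerts]) (by simp [hexVerts]) (a := (2 * p 0 - 3 * p 1 + 5) / 4)
      (b := p 1 - 1) (c := (3 - p 1 - 2 * p 0) / 4)
      (by linarith) (by linarith) (by linarith) (by ring)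
    exact (coords _ (by simp; ring) (by simp; ring)).symm
  rcases le_or_gt (p 1) (-1) with hbot | hmid
  · convert hull (u := ![-1, -1]) (v := ![-(1/2), -2]) (w := ![1, -1]) (by simp [hexVerts])
      (by simp [hexVerts]) (by simp [hexVerts]) (a := (-2 * p 0 + 3 * p 1 + 5) / 4)
      (b := -p 1 - 1) (c := (3 + p 1 + 2 * p 0) / 4)
      (by linarith) (by linarith) (by linarith) (by ring)
    exact (coords _ (by simp; ring) (by simp; ring)).symm
  rcases le_or_gt (p 0) (p 1) with hleft | hright
  · convert hull (u := ![1, 1]) (v := ![-1, 1]) (w := ![-1, -1]) (by simp [hexVerts])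
      (by simp [hexVerts]) (by simp [hexVerts]) (a := (p 0 + 1) / 2)
      (b := (p 1 - p 0) / 2) (c := (1 - p 1) / 2)
      (by linarith) (by linarith) (by linarith) (by ring)
    exact (coords _ (by simp; ring) (by simp; ring)).symm
  · convert hull (u := ![-1, -1]) (v := ![1, -1]) (w := ![1, 1]) (by simp [hexVerts])
      (by simp [hexVerts]) (by simp [hexVerts]) (a := (1 - p 0) / 2)
      (b := (p 0 - p 1) / 2) (c := (1 + p 1) / 2)
      (by linarith) (by linarith) (by linarith) (by ring)
    exact (coords _ (by simp; ring) (by simp; ring)).symm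

lemma hexGauge_lt_one {p : Fin 2 → ℝ} (h₁ : |(2/3) * p 0 + (1/3) * p 1| < 5 / 17)
    (h₂ : |p 0| < 5 / 17) : hexGauge p < 1 := by
  simp only [hexGauge, max_lt_iff, div_lt_one (by norm_num : (0 : ℝ) < 3),
    div_lt_one (by norm_num : (0 : ℝ) < 5), abs_lt] at h₁ h₂ ⊢
  obtain ⟨h₁l, h₁r⟩ := h₁
  obtain ⟨h₂l, h₂r⟩ := h₂
  refine ⟨⟨?_, ?_⟩, ⟨?_, ?_⟩, ?_, ?_⟩ <;> linarith

lemma norm_le_of_inv_smul_mem_closedBall {X : Type*} [SeminormedAddCommGroup X]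
    [NormedSpace ℝ X] {x : X} {r : ℝ} (hr : 0 < r) (h : r⁻¹ • x ∈ closedBall (0 : X) 1) :
    ‖x‖ ≤ r := by
  rw [mem_closedBall_zero_iff, norm_smul_of_nonneg (inv_nonneg.mpr hr.le), inv_mul_le_iff₀ hr,
    mul_one] at h
  exact h

lemma norm_lt_one_of_hexGauge_lt_one {X : Type*} [NormedAddCommGroup X] [NormedSpace ℝ X]
    (e : X ≃ₗ[ℝ] (Fin 2 → ℝ)) (hball : closedBall (0 : X) 1 = e ⁻¹' (convexHull ℝ hexVerts))
    {x : X} (hx : hexGauge (e x) < 1) : ‖x‖ < 1 := by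
  -- Rescaling by `max _ (1/2)` rather than by the gauge itself avoids dividing by zero at `x = 0`.
  set r := max (hexGauge (e x)) (1 / 2)
  have hr : 0 < r := lt_max_of_lt_right (by norm_num)
  have hmem : r⁻¹ • x ∈ closedBall (0 : X) 1 := by
    rw [hball, mem_preimage, map_smul]
    refine mem_convexHull_hexVerts_of_hexGauge_le_one ?_
    rw [hexGauge_smul (inv_nonneg.mpr hr.le), inv_mul_le_one₀ hr]
    exact le_max_left _ _
  exact (norm_le_of_inv_smul_mem_closedBall hr hmem).trans_lt (max_lt hx (by norm_num))

theorem stmt_6 {X : Type*} [NormedAddCommGroup X] [NormedSpace ℝ X]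
    (e : X ≃ₗ[ℝ] (Fin 2 → ℝ))
    (hball : closedBall (0 : X) 1 = e ⁻¹' (convexHull ℝ hexVerts))
    (f₁ f₂ : X → ℝ)
    (hf₁ : ∀ x : X, f₁ x = (2/3) * e x 0 + (1/3) * e x 1)
    (hf₂ : ∀ x : X, f₂ x = e x 0) :
    ∀ x : X, ‖x‖ = 1 → max |f₁ x| |f₂ x| ≥ 5 / 17 := by
  intro x hx
  by_contra! hlt
  rw [max_lt_iff, hf₁, hf₂] at hlt
  have := norm_lt_one_of_hexGauge_lt_one e hball (hexGauge_lt_one hlt.1 hlt.2)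
  exact this.ne hx
end

section
/- Let X = R² with the norm whose unit ball is the hexagon with vertices ±(1,1), ±(1/2,2), ±(−1,1). For the two supporting functionals corresponding to the edges meeting at the vertex (1/2,2), the minimum over the unit sphere of the maximum of their absolute values equals 4/7, and for the vertex (−1,1) it equals 9/13. -/
/-!
Let `A = (1, 1)`, `B = (1/2, 2)`, `C = (-1, 1)`, `D = (-1, -1)`, and let `f_AB`, `f_BC`, `f_CD` be
the linear functionals equal to `1` on the edges `[A, B]`, `[B, C]`, `[C, D]`. Then
`‖x‖ = max |f(e x)|` over these three functionals: `≥` because each `|f| ≤ 1` on the vertices, and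
`≤` because on the cone over an edge `[P, Q]` we have `e x = α P + β Q` with `α, β ≥ 0`, so that
`‖x‖ ≤ α + β = f_PQ (e x)`. A supporting functional of an edge agrees with `f_PQ` at `P` and `Q`,
hence equals `f_PQ ∘ e`.

The third functional is a combination of the other two: `f_CD = -(9/8) f_AB + (5/8) f_BC` and
`f_AB = (5/9) f_BC - (8/9) f_CD`, whence `max (|f_AB|, |f_BC|) ≥ 4/7 ‖x‖` and
`max (|f_BC|, |f_CD|) ≥ 9/13 ‖x‖`, with equality at `(1, -2/7)` and `(9/13, 21/13)`.
-/

open Metric Set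

noncomputable section

def planeFunctional (s t : ℝ) : (Fin 2 → ℝ) →ₗ[ℝ] ℝ :=
  s • LinearMap.proj 0 + t • LinearMap.proj 1

@[simp]
lemma planeFunctional_apply (s t : ℝ) (v : Fin 2 → ℝ) :
    planeFunctional s t v = s * v 0 + t * v 1 := rfl

abbrev edgeAB : (Fin 2 → ℝ) →ₗ[ℝ] ℝ := planeFunctional (2/3) (1/3)
abbrev edgeBC : (Fin 2 → ℝ) →ₗ[ℝ] ℝ := planeFunctional (-2/5) (3/5)
abbrev edgeCD : (Fin 2 → ℝ) →ₗ[ℝ] ℝ := planeFunctional (-1) 0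

def hexNorm (v : Fin 2 → ℝ) : ℝ := max (max |edgeAB v| |edgeBC v|) |edgeCD v|

end

lemma hexNorm_neg (v : Fin 2 → ℝ) : hexNorm (-v) = hexNorm v := by
  simp only [hexNorm, map_neg, abs_neg]

lemma abs_edge_le_one_of_mem_hexVerts {v : Fin 2 → ℝ} (hv : v ∈ hexVerts) :
    |edgeAB v| ≤ 1 ∧ |edgeBC v| ≤ 1 ∧ |edgeCD v| ≤ 1 := by
  simp only [hexVerts, mem_insert_iff, mem_singleton_iff] at hv
  rcases hv with rfl | rfl | rfl | rfl | rfl | rfl <;> norm_num [abs_le]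

lemma mul_hexNorm_le_max_AB_BC (v : Fin 2 → ℝ) :
    4/7 * hexNorm v ≤ max |edgeAB v| |edgeBC v| := by
  set M := max |edgeAB v| |edgeBC v|
  have hAB : |edgeAB v| ≤ M := le_max_left _ _
  have hBC : |edgeBC v| ≤ M := le_max_right _ _
  have hCD : |edgeCD v| ≤ 7/4 * M := by
    have h : edgeCD v = -(9/8) * edgeAB v + 5/8 * edgeBC v := by
      simp only [planeFunctional_apply]; ring
    rw [h, abs_le]
    constructor <;> linarith [le_abs_self (edgeAB v), neg_abs_le (edgeAB v),
      le_abs_self (edgeBC v), neg_abs_le (edgeBC v)]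
  have : hexNorm v ≤ 7/4 * M :=
    max_le (max_le (by linarith [abs_nonneg (edgeAB v)]) (by linarith [abs_nonneg (edgeBC v)])) hCD
  linarith

lemma mul_hexNorm_le_max_BC_CD (v : Fin 2 → ℝ) :
    9/13 * hexNorm v ≤ max |edgeBC v| |edgeCD v| := by
  set M := max |edgeBC v| |edgeCD v|
  have hBC : |edgeBC v| ≤ M := le_max_left _ _
  have hCD : |edgeCD v| ≤ M := le_max_right _ _
  have hAB : |edgeAB v| ≤ 13/9 * M := by
    have h : edgeAB v = 5/9 * edgeBC v - 8/9 * edgeCD v := by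
      simp only [planeFunctional_apply]; ring
    rw [h, abs_le]
    constructor <;> linarith [le_abs_self (edgeBC v), neg_abs_le (edgeBC v),
      le_abs_self (edgeCD v), neg_abs_le (edgeCD v)]
  have : hexNorm v ≤ 13/9 * M :=
    max_le (max_le hAB (by linarith [abs_nonneg (edgeBC v)])) (by linarith [abs_nonneg (edgeCD v)])
  linarith

lemma eq_smul_add_smul_AB (v : Fin 2 → ℝ) :
    v = ((4 * v 0 - v 1) / 3) • ![1, 1] + (2 * (v 1 - v 0) / 3) • ![1/2, 2] := by
  ext i
  fin_cases i <;> simp only [Pi.add_apply, Pi.smul_apply, smul_eq_mul, Fin.zero_eta, Fin.mk_one,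
    Matrix.cons_val_zero, Matrix.cons_val_one, Matrix.cons_val_fin_one] <;> ring

lemma eq_smul_add_smul_BC (v : Fin 2 → ℝ) :
    v = (2 * (v 0 + v 1) / 5) • ![1/2, 2] + ((v 1 - 4 * v 0) / 5) • ![-1, 1] := by
  ext i
  fin_cases i <;> simp only [Pi.add_apply, Pi.smul_apply, smul_eq_mul, Fin.zero_eta, Fin.mk_one,
    Matrix.cons_val_zero, Matrix.cons_val_one, Matrix.cons_val_fin_one] <;> ring

lemma eq_smul_add_smul_CD (v : Fin 2 → ℝ) :
    v = ((v 1 - v 0) / 2) • ![-1, 1] + (-(v 0 + v 1) / 2) • ![-1, -1] := by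
  ext i
  fin_cases i <;> simp only [Pi.add_apply, Pi.smul_apply, smul_eq_mul, Fin.zero_eta, Fin.mk_one,
    Matrix.cons_val_zero, Matrix.cons_val_one, Matrix.cons_val_fin_one] <;> ring

lemma norm_smul_add_smul_le {E : Type*} [SeminormedAddCommGroup E] [NormedSpace ℝ E] {y z : E}
    (hy : ‖y‖ ≤ 1) (hz : ‖z‖ ≤ 1) {α β : ℝ} (hα : 0 ≤ α) (hβ : 0 ≤ β) :
    ‖α • y + β • z‖ ≤ α + β :=
  calc ‖α • y + β • z‖ ≤ α * ‖y‖ + β * ‖z‖ := by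
        refine (norm_add_le _ _).trans_eq ?_
        rw [norm_smul_of_nonneg hα, norm_smul_of_nonneg hβ]
    _ ≤ α + β := by nlinarith

section

variable {X : Type*} [NormedAddCommGroup X] [NormedSpace ℝ X] {e : X ≃ₗ[ℝ] (Fin 2 → ℝ)}

abbrev IsHexagonalNorm (e : X ≃ₗ[ℝ] (Fin 2 → ℝ)) : Prop :=
  closedBall (0 : X) 1 = e ⁻¹' convexHull ℝ hexVerts

lemma apply_eq_of_forall_segment {F : Type*} [FunLike F X ℝ] [LinearMapClass F ℝ X ℝ] (g : F)
    {p q : Fin 2 → ℝ} (hg : ∀ x, e x ∈ segment ℝ p q → g x = 1) {x : X} {α β : ℝ}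
    (hx : e x = α • p + β • q) : g x = α + β := by
  have hp : g (e.symm p) = 1 := hg _ (by simpa using left_mem_segment ℝ p q)
  have hq : g (e.symm q) = 1 := hg _ (by simpa using right_mem_segment ℝ p q)
  rw [← e.symm_apply_apply x, hx, map_add, map_smul, map_smul, map_add, map_smul, map_smul, hp, hq,
    smul_eq_mul, smul_eq_mul, mul_one, mul_one]

section

variable {F : Type*} [FunLike F X ℝ] [LinearMapClass F ℝ X ℝ] (g : F)

lemma apply_eq_edgeAB (hg : ∀ x, e x ∈ segment ℝ ![(1 : ℝ), 1] ![1/2, 2] → g x = 1) (x : X) :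
    g x = edgeAB (e x) := by
  rw [apply_eq_of_forall_segment g hg (eq_smul_add_smul_AB (e x)), planeFunctional_apply]
  ring

lemma apply_eq_edgeBC (hg : ∀ x, e x ∈ segment ℝ ![(1/2 : ℝ), 2] ![-1, 1] → g x = 1) (x : X) :
    g x = edgeBC (e x) := by
  rw [apply_eq_of_forall_segment g hg (eq_smul_add_smul_BC (e x)), planeFunctional_apply]
  ring

lemma apply_eq_edgeCD (hg : ∀ x, e x ∈ segment ℝ ![(-1 : ℝ), 1] ![-1, -1] → g x = 1) (x : X) :
    g x = edgeCD (e x) := by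
  rw [apply_eq_of_forall_segment g hg (eq_smul_add_smul_CD (e x)), planeFunctional_apply]
  ring

end

lemma norm_symm_le_one (hball : IsHexagonalNorm e) {v : Fin 2 → ℝ} (hv : v ∈ hexVerts) :
    ‖e.symm v‖ ≤ 1 := by
  rw [← mem_closedBall_zero_iff, hball, mem_preimage, e.apply_symm_apply]
  exact subset_convexHull ℝ hexVerts hv

lemma norm_le_of_eq_smul_add_smul (hball : IsHexagonalNorm e) {p q : Fin 2 → ℝ}
    (hp : p ∈ hexVerts) (hq : q ∈ hexVerts) {x : X} {α β : ℝ} (hx : e x = α • p + β • q)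
    (hα : 0 ≤ α) (hβ : 0 ≤ β) : ‖x‖ ≤ α + β := by
  rw [← e.symm_apply_apply x, hx, map_add, map_smul, map_smul]
  exact norm_smul_add_smul_le (norm_symm_le_one hball hp) (norm_symm_le_one hball hq) hα hβ

lemma abs_apply_le_norm (hball : IsHexagonalNorm e) (L : (Fin 2 → ℝ) →ₗ[ℝ] ℝ)
    (hL : ∀ v ∈ hexVerts, |L v| ≤ 1) (x : X) : |L (e x)| ≤ ‖x‖ := by
  have hconv : Convex ℝ {v | |L v| ≤ 1} := by
    simp only [abs_le]
    exact (convex_Icc (-1 : ℝ) 1).linear_preimage L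
  have hbound (z : X) (hz : z ∈ closedBall 0 1) : ‖(L ∘ₗ e.toLinearMap) z‖ ≤ 1 := by
    rw [hball] at hz
    exact convexHull_min hL hconv hz
  simpa using (L ∘ₗ e.toLinearMap).bound_of_ball_bound' one_pos 1 hbound x

lemma hexNorm_le_norm (hball : IsHexagonalNorm e) (x : X) : hexNorm (e x) ≤ ‖x‖ :=
  max_le
    (max_le (abs_apply_le_norm hball _ (fun _ hv ↦ (abs_edge_le_one_of_mem_hexVerts hv).1) x)
      (abs_apply_le_norm hball _ (fun _ hv ↦ (abs_edge_le_one_of_mem_hexVerts hv).2.1) x))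
    (abs_apply_le_norm hball _ (fun _ hv ↦ (abs_edge_le_one_of_mem_hexVerts hv).2.2) x)

lemma norm_le_hexNorm (hball : IsHexagonalNorm e) (x : X) : ‖x‖ ≤ hexNorm (e x) := by
  wlog hle : e x 0 ≤ e x 1 generalizing x
  · have h := this (-x) (by simp only [map_neg, Pi.neg_apply, neg_le_neg_iff]; linarith)
    rwa [norm_neg, map_neg, hexNorm_neg] at h
  have hAB : |edgeAB (e x)| ≤ hexNorm (e x) := (le_max_left _ _).trans (le_max_left _ _)
  have hBC : |edgeBC (e x)| ≤ hexNorm (e x) := (le_max_right _ _).trans (le_max_left _ _)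
  have hCD : |edgeCD (e x)| ≤ hexNorm (e x) := le_max_right _ _
  rcases le_total (e x 1) (4 * e x 0) with h4 | h4
  · calc ‖x‖ ≤ _ := norm_le_of_eq_smul_add_smul hball (by simp [hexVerts]) (by simp [hexVerts])
          (eq_smul_add_smul_AB (e x)) (by linarith) (by linarith)
      _ = edgeAB (e x) := by rw [planeFunctional_apply]; ring
      _ ≤ hexNorm (e x) := (le_abs_self _).trans hAB
  rcases le_total 0 (e x 0 + e x 1) with hs | hs
  · calc ‖x‖ ≤ _ := norm_le_of_eq_smul_add_smul hball (by simp [hexVerts]) (by simp [hexVerts])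
          (eq_smul_add_smul_BC (e x)) (by linarith) (by linarith)
      _ = edgeBC (e x) := by rw [planeFunctional_apply]; ring
      _ ≤ hexNorm (e x) := (le_abs_self _).trans hBC
  · calc ‖x‖ ≤ _ := norm_le_of_eq_smul_add_smul hball (by simp [hexVerts]) (by simp [hexVerts])
          (eq_smul_add_smul_CD (e x)) (by linarith) (by linarith)
      _ = edgeCD (e x) := by rw [planeFunctional_apply]; ring
      _ ≤ hexNorm (e x) := (le_abs_self _).trans hCD

theorem norm_eq_hexNorm (hball : IsHexagonalNorm e) (x : X) : ‖x‖ = hexNorm (e x) :=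
  (norm_le_hexNorm hball x).antisymm (hexNorm_le_norm hball x)

theorem sInf_max_abs_eq (hball : IsHexagonalNorm e) (f₁ f₂ : (Fin 2 → ℝ) →ₗ[ℝ] ℝ) {m : ℝ}
    (hle : ∀ v, m * hexNorm v ≤ max |f₁ v| |f₂ v|) (v₀ : Fin 2 → ℝ) (hv₀ : hexNorm v₀ = 1)
    (hm : max |f₁ v₀| |f₂ v₀| = m) :
    sInf {t : ℝ | ∃ x : X, ‖x‖ = 1 ∧ t = max |f₁ (e x)| |f₂ (e x)|} = m := by
  refine IsLeast.csInf_eq ⟨⟨e.symm v₀, ?_, ?_⟩, ?_⟩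
  · rw [norm_eq_hexNorm hball, e.apply_symm_apply, hv₀]
  · rw [e.apply_symm_apply, hm]
  · rintro _ ⟨x, hx, rfl⟩
    simpa only [← norm_eq_hexNorm hball, hx, mul_one] using hle (e x)

end

theorem stmt_18 {X : Type*} [NormedAddCommGroup X] [NormedSpace ℝ X]
    (e : X ≃ₗ[ℝ] (Fin 2 → ℝ))
    (hball : closedBall (0 : X) 1 = e ⁻¹' (convexHull ℝ hexVerts)) :
    (∀ g₁ g₂ : X →L[ℝ] ℝ, ‖g₁‖ = 1 → ‖g₂‖ = 1 →
      (∀ x : X, e x ∈ segment ℝ ![(1:ℝ), 1] ![1/2, 2] → g₁ x = 1) →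
      (∀ x : X, e x ∈ segment ℝ ![(1/2 : ℝ), 2] ![-1, 1] → g₂ x = 1) →
      sInf {t : ℝ | ∃ x : X, ‖x‖ = 1 ∧ t = max |g₁ x| |g₂ x|} = 4 / 7) ∧
    (∀ g₁ g₂ : X →L[ℝ] ℝ, ‖g₁‖ = 1 → ‖g₂‖ = 1 →
      (∀ x : X, e x ∈ segment ℝ ![(1/2 : ℝ), 2] ![-1, 1] → g₁ x = 1) →
      (∀ x : X, e x ∈ segment ℝ ![(-1 : ℝ), 1] ![-1, -1] → g₂ x = 1) →
      sInf {t : ℝ | ∃ x : X, ‖x‖ = 1 ∧ t = max |g₁ x| |g₂ x|} = 9 / 13) := by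
  refine ⟨fun g₁ g₂ _ _ hg₁ hg₂ ↦ ?_, fun g₁ g₂ _ _ hg₁ hg₂ ↦ ?_⟩
  · simp only [apply_eq_edgeAB g₁ hg₁, apply_eq_edgeBC g₂ hg₂]
    exact sInf_max_abs_eq hball _ _ mul_hexNorm_le_max_AB_BC ![1, -2/7]
      (by norm_num [hexNorm]) (by norm_num)
  · simp only [apply_eq_edgeBC g₁ hg₁, apply_eq_edgeCD g₂ hg₂]
    exact sInf_max_abs_eq hball _ _ mul_hexNorm_le_max_BC_CD ![9/13, 21/13]
      (by norm_num [hexNorm]) (by norm_num)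
end

section
/- Let n ≥ 1 be odd and let X be the 3-dimensional Banach space whose unit ball is the right prism with vertices (cos((j−1)π/n), sin((j−1)π/n), ±1), j = 1, …, 2n. The linear operator T determined by Tv_j = (−sin((j−1)π/n)·cos(π/(2n)), cos((j−1)π/n)·cos(π/(2n)), sin(π/(2n))) for v_j = (cos((j−1)π/n), sin((j−1)π/n), 1) has ‖T‖ = 1 and numerical radius v(T) = sin(π/(2n)). -/
open Metric Set Real

/-- Vertices of the right prism over the regular 2n-gon:
`(cos((j-1)π/n), sin((j-1)π/n), ±1)`, `j = 1, …, 2n`. -/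
def prismVerts (n : ℕ) : Set (Fin 3 → ℝ) :=
  {p | ∃ j : Fin (2 * n),
    p = ![Real.cos (j * π / n), Real.sin (j * π / n), 1] ∨
    p = ![Real.cos (j * π / n), Real.sin (j * π / n), -1]}

section UnitBallHull

variable {X F : Type*} [NormedAddCommGroup X] [NormedSpace ℝ X]
  [NormedAddCommGroup F] [NormedSpace ℝ F] {K : Set X}

theorem ContinuousLinearMap.opNorm_le_one_of_closedBall_eq_convexHull
    (hK : closedBall (0 : X) 1 = convexHull ℝ K) {A : X →L[ℝ] F} (hA : ∀ v ∈ K, ‖A v‖ ≤ 1) :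
    ‖A‖ ≤ 1 := by
  have hmaps : closedBall (0 : X) 1 ⊆ A ⁻¹' closedBall 0 1 := by
    rw [hK]
    exact convexHull_min (fun v hv => by simpa using hA v hv)
      ((convex_closedBall 0 1).linear_preimage (A : X →ₗ[ℝ] F))
  refine A.opNorm_le_of_unit_norm zero_le_one fun x hx => ?_
  simpa using hmaps (by simpa using hx.le)

theorem mem_convexHull_inter_of_apply_eq_one {E : Type*} [AddCommGroup E] [Module ℝ E]
    {S : Set E} {f : E →ₗ[ℝ] ℝ} (hf : ∀ v ∈ S, f v ≤ 1) {x : E} (hx : x ∈ convexHull ℝ S)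
    (hfx : f x = 1) : x ∈ convexHull ℝ (S ∩ {v | f v = 1}) := by
  classical
  rw [convexHull_eq] at hx
  obtain ⟨ι, t, w, z, hw₀, hw₁, hz, rfl⟩ := hx
  rw [Finset.centerMass_eq_of_sum_1 _ _ hw₁, map_sum] at hfx
  -- `∑ wᵢ (1 - f zᵢ) = 0` with nonnegative terms, so `f zᵢ = 1` whenever `wᵢ ≠ 0`
  have hslack : ∀ i ∈ t, w i * (1 - f (z i)) = 0 := by
    refine (Finset.sum_eq_zero_iff_of_nonneg fun i hi =>
      mul_nonneg (hw₀ i hi) (sub_nonneg.2 (hf _ (hz i hi)))).1 ?_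
    simp only [mul_sub, mul_one, Finset.sum_sub_distrib, hw₁, map_smul, smul_eq_mul] at hfx ⊢
    linarith
  rw [← Finset.centerMass_filter_ne_zero]
  refine Finset.centerMass_mem_convexHull _ (fun i hi => hw₀ i (Finset.mem_filter.1 hi).1)
    (by rw [Finset.sum_filter_ne_zero, hw₁]; exact one_pos) fun i hi => ?_
  obtain ⟨hi, hwi⟩ := Finset.mem_filter.1 hi
  exact ⟨hz i hi, by
    have := (mul_eq_zero.1 (hslack i hi)).resolve_left hwi
    simp only [mem_ofPred_eq]; linarith⟩

theorem abs_apply_le_of_closedBall_eq_convexHull (hK : closedBall (0 : X) 1 = convexHull ℝ K)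
    {T : X →L[ℝ] X} {r : ℝ}
    (hT : ∀ v ∈ K, ∀ f : X →L[ℝ] ℝ, ‖f‖ ≤ 1 → f v = 1 → |f (T v)| ≤ r)
    {x : X} (hx : ‖x‖ ≤ 1) {f : X →L[ℝ] ℝ} (hf : ‖f‖ ≤ 1) (hfx : f x = 1) :
    |f (T x)| ≤ r := by
  have hfK : ∀ v ∈ K, (f : X →ₗ[ℝ] ℝ) v ≤ 1 := fun v hv => by
    have hv : v ∈ closedBall (0 : X) 1 := hK ▸ subset_convexHull ℝ K hv
    rw [mem_closedBall_zero_iff] at hv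
    exact (le_abs_self _).trans (f.le_of_opNorm_le_of_le hf hv |>.trans_eq (one_mul 1))
  have hface := mem_convexHull_inter_of_apply_eq_one hfK
    (by rw [← hK]; simpa using hx) hfx
  have hconv : Convex ℝ ((f ∘L T : X →ₗ[ℝ] ℝ) ⁻¹' Icc (-r) r) :=
    (convex_Icc _ _).linear_preimage _
  exact abs_le.2 (convexHull_min (fun v hv => abs_le.1 (hT v hv.1 f hf hv.2)) hconv hface)

theorem norm_eq_one_of_apply_eq_one {x : X} {f : X →L[ℝ] ℝ} (hx : ‖x‖ ≤ 1) (hf : ‖f‖ ≤ 1)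
    (hfx : f x = 1) : ‖x‖ = 1 ∧ ‖f‖ = 1 := by
  have h := f.le_opNorm x
  rw [hfx, norm_one] at h
  constructor <;> nlinarith [norm_nonneg x, norm_nonneg f]

theorem ContinuousLinearMap.one_le_opNorm_of_apply_eq_one {T : X →L[ℝ] F} {x : X}
    {f : F →L[ℝ] ℝ} (hx : ‖x‖ ≤ 1) (hf : ‖f‖ ≤ 1) (hfx : f (T x) = 1) : 1 ≤ ‖T‖ := by
  have h := (f ∘L T).le_opNorm x
  rw [ContinuousLinearMap.comp_apply, hfx, norm_one] at h
  have := f.opNorm_comp_le T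
  nlinarith [norm_nonneg x, norm_nonneg f, norm_nonneg T, norm_nonneg (f ∘L T)]

theorem LinearMap.eq_zero_of_closedBall_subset_ker {E : Type*} [AddCommGroup E] [Module ℝ E]
    {ℓ : X →ₗ[ℝ] E} (h : closedBall (0 : X) 1 ⊆ LinearMap.ker ℓ) : ℓ = 0 := by
  ext y
  rcases eq_or_ne y 0 with rfl | hy
  · simp
  have hy' : ‖y‖⁻¹ • y ∈ closedBall (0 : X) 1 := by
    simp [norm_smul, inv_mul_cancel₀ (norm_ne_zero_iff.2 hy)]
  have := h hy'
  rw [SetLike.mem_coe, LinearMap.mem_ker, map_smul, smul_eq_zero] at this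
  simpa [hy] using this

end UnitBallHull

theorem abs_add_abs_le_one {a b : ℝ} (h₁ : |a + b| ≤ 1) (h₂ : |a - b| ≤ 1) : |a| + |b| ≤ 1 := by
  rw [abs_le] at h₁ h₂
  rcases abs_cases a with ⟨ha, _⟩ | ⟨ha, _⟩ <;> rcases abs_cases b with ⟨hb, _⟩ | ⟨hb, _⟩ <;>
    rw [ha, hb] <;> linarith

theorem abs_mul_cos_add_mul_sin_le {u w γ ε φ : ℝ} (hφ : 0 < φ) (hφ' : φ ≤ π / 2)
    (hε : ε = 1 ∨ ε = -1) (hu : |u| + |γ| ≤ 1) (hv : u + γ * ε = 1)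
    (hnext : |u * cos (2 * φ) + w * sin (2 * φ)| + |γ| ≤ 1)
    (hprev : |u * cos (2 * φ) - w * sin (2 * φ)| + |γ| ≤ 1) :
    |w * cos φ + γ * ε * sin φ| ≤ sin φ := by
  have hs : 0 < sin φ := sin_pos_of_pos_of_lt_pi hφ (by linarith [pi_pos])
  have hc : 0 ≤ cos φ := cos_nonneg_of_mem_Icc ⟨by linarith, hφ'⟩
  have hγε : γ * ε = |γ| := by
    rcases hε with rfl | rfl <;> cases abs_cases γ <;> cases abs_cases u <;> linarith
  -- both neighbours give `|w sin 2φ| ≤ u (1 - cos 2φ)`, i.e. `cos φ |w| ≤ sin φ u`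
  have hw2 : |w * sin (2 * φ)| ≤ u * (1 - cos (2 * φ)) := by
    rw [abs_le]
    constructor <;> linarith [le_abs_self (u * cos (2 * φ) + w * sin (2 * φ)),
      le_abs_self (u * cos (2 * φ) - w * sin (2 * φ))]
  have hw : cos φ * |w| ≤ sin φ * u := by
    rw [sin_two_mul, cos_two_mul, ← sin_sq_add_cos_sq φ, abs_mul w,
      abs_of_nonneg (by positivity : 0 ≤ 2 * sin φ * cos φ)]
      at hw2
    nlinarith
  calc |w * cos φ + γ * ε * sin φ| ≤ |w| * cos φ + |γ| * sin φ := by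
        rw [hγε]
        refine (abs_add_le _ _).trans_eq ?_
        rw [abs_mul, abs_mul, abs_abs, abs_of_nonneg hc, abs_of_pos hs]
    _ ≤ sin φ := by nlinarith

theorem abs_sin_le_cos_pi_div_two_mul {n : ℕ} (hodd : Odd n) (k : ℤ) :
    |sin (k * π / n)| ≤ cos (π / (2 * n)) := by
  obtain ⟨m, hm⟩ := hodd
  have hn' : (n : ℝ) = 2 * m + 1 := by exact_mod_cast hm
  have hnpos : (0 : ℝ) < n := by rw [hn']; positivity
  set r : ℤ := (k + m) % n - m
  set q : ℤ := (k + m) / n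
  have hr : -(m : ℤ) ≤ r ∧ r ≤ m := by
    have h₁ := Int.emod_nonneg (k + m) (by omega : (n : ℤ) ≠ 0)
    have h₂ := Int.emod_lt_of_pos (k + m) (by omega : (0 : ℤ) < n)
    omega
  have hk : (k : ℝ) * π / n = r * π / n + q * π := by
    have hkrq : (k : ℝ) = r + n * q := by
      have := congrArg (Int.cast : ℤ → ℝ) (Int.emod_add_mul_ediv (k + m) n)
      push_cast at this
      simp only [r, q]; push_cast; linarith
    rw [hkrq]; field_simp
  have hcos : cos (π / (2 * n)) = sin (m * π / n) := by
    rw [← cos_pi_div_two_sub]; congr 1; field_simp; rw [hn']; ring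
  have hm_le : (m : ℝ) * π / n ≤ π / 2 := by
    rw [div_le_div_iff₀ hnpos two_pos, hn']; nlinarith [pi_pos]
  have hr' : -(m : ℝ) ≤ r ∧ (r : ℝ) ≤ m := by exact_mod_cast hr
  have hmono : ∀ {a b : ℝ}, a ≤ b → a * π / n ≤ b * π / n := fun hab => by gcongr
  rw [hk, sin_add_int_mul_pi, abs_mul, abs_neg_one_zpow, one_mul, hcos, abs_le, ← sin_neg,
    ← neg_div, ← neg_mul]
  have h₁ := hmono hr'.1
  have h₂ := hmono hr'.2
  have hneg : -(m : ℝ) * π / n = -(m * π / n) := by ring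
  constructor <;> apply sin_le_sin_of_le_of_le_pi_div_two <;> linarith

noncomputable def prismVertex (n : ℕ) (k : ℤ) (ε : ℝ) : Fin 3 → ℝ :=
  ![cos (k * π / n), sin (k * π / n), ε]

theorem prismVertex_add_mul {n : ℕ} (hn : n ≠ 0) (k q : ℤ) (ε : ℝ) :
    prismVertex n (k + 2 * n * q) ε = prismVertex n k ε := by
  have h : ((k + 2 * n * q : ℤ) : ℝ) * π / n = k * π / n + q * (2 * π) := by
    push_cast; field_simp
  simp only [prismVertex, h, cos_add_int_mul_two_pi, sin_add_int_mul_two_pi]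

theorem mem_prismVerts_iff {n : ℕ} (hn : n ≠ 0) {p : Fin 3 → ℝ} :
    p ∈ prismVerts n ↔ ∃ (k : ℤ) (ε : ℝ), (ε = 1 ∨ ε = -1) ∧ p = prismVertex n k ε := by
  constructor
  · rintro ⟨j, rfl | rfl⟩
    · exact ⟨j, 1, Or.inl rfl, by simp [prismVertex]⟩
    · exact ⟨j, -1, Or.inr rfl, by simp [prismVertex]⟩
  · rintro ⟨k, ε, hε, rfl⟩
    have h2n : (0 : ℤ) < 2 * n := by positivity
    have hr := Int.emod_nonneg k h2n.ne'
    have hj : (k % (2 * n)).toNat < 2 * n := by have := Int.emod_lt_of_pos k h2n; omega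
    have hk : prismVertex n k ε = prismVertex n (k % (2 * n)).toNat ε := by
      rw [Int.toNat_of_nonneg hr, ← prismVertex_add_mul hn (k % (2 * n)) (k / (2 * n)),
        Int.emod_add_mul_ediv]
    refine ⟨⟨_, hj⟩, ?_⟩
    rcases hε with rfl | rfl
    · exact Or.inl (hk.trans (by simp only [prismVertex, Int.cast_natCast]))
    · exact Or.inr (hk.trans (by simp only [prismVertex, Int.cast_natCast]))

theorem closedBall_ne_preimage_convexHull_prismVerts_one {X : Type*} [NormedAddCommGroup X]
    [NormedSpace ℝ X] (e : X ≃ₗ[ℝ] (Fin 3 → ℝ)) :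
    closedBall (0 : X) 1 ≠ e ⁻¹' convexHull ℝ (prismVerts 1) := by
  intro hball
  let y : (Fin 3 → ℝ) →ₗ[ℝ] ℝ := LinearMap.proj 1
  have hflat : convexHull ℝ (prismVerts 1) ⊆ LinearMap.ker y := by
    refine convexHull_min ?_ (Submodule.convex _)
    rintro _ ⟨j, rfl | rfl⟩ <;> simp [y, sin_nat_mul_pi]
  have h0 := LinearMap.eq_zero_of_closedBall_subset_ker (ℓ := y ∘ₗ e.toLinearMap)
    (by rw [hball]; exact fun x hx => hflat hx)
  simpa [y] using LinearMap.congr_fun h0 (e.symm (Pi.single 1 1))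

noncomputable def prismRot (n : ℕ) : (Fin 3 → ℝ) →ₗ[ℝ] (Fin 3 → ℝ) where
  toFun p := ![-p 1 * cos (π / (2 * n)), p 0 * cos (π / (2 * n)), p 2 * sin (π / (2 * n))]
  map_add' p q := by ext i; fin_cases i <;> simp <;> ring
  map_smul' r p := by ext i; fin_cases i <;> simp <;> ring

theorem prismRot_prismVertex (n : ℕ) (k : ℤ) (ε : ℝ) :
    prismRot n (prismVertex n k ε) =
      ![-sin (k * π / n) * cos (π / (2 * n)), cos (k * π / n) * cos (π / (2 * n)),
        ε * sin (π / (2 * n))] := rfl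

theorem cast_add_half_mul_pi_div {n m : ℕ} (hn : n = 2 * m + 1) (k : ℤ) :
    ((k + m : ℤ) : ℝ) * π / n = k * π / n + π / 2 - π / (2 * n) ∧
    ((k + m + 1 : ℤ) : ℝ) * π / n = k * π / n + π / 2 + π / (2 * n) := by
  have hn' : (n : ℝ) = 2 * m + 1 := by exact_mod_cast hn
  constructor <;> (push_cast; rw [hn']; field_simp; ring)

theorem midpoint_prismVertex {n m : ℕ} (hn : n = 2 * m + 1) (k : ℤ) (δ : ℝ) :
    (1 / 2 : ℝ) • prismVertex n (k + m) δ + (1 / 2 : ℝ) • prismVertex n (k + m + 1) δ =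
      ![-sin (k * π / n) * cos (π / (2 * n)), cos (k * π / n) * cos (π / (2 * n)), δ] := by
  obtain ⟨h₁, h₂⟩ := cast_add_half_mul_pi_div hn k
  simp only [prismVertex, h₁, h₂]
  ext i
  fin_cases i <;> simp [cos_add, cos_sub, sin_add, sin_sub] <;> ring

theorem prismRot_mapsTo_convexHull {n : ℕ} (hodd : Odd n) :
    MapsTo (prismRot n) (convexHull ℝ (prismVerts n)) (convexHull ℝ (prismVerts n)) := by
  obtain ⟨m, hm⟩ := hodd
  have hn : n ≠ 0 := by omega
  refine convexHull_min (fun p hp => ?_) ((convex_convexHull ℝ _).linear_preimage _)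
  obtain ⟨k, ε, hε, rfl⟩ := (mem_prismVerts_iff hn).1 hp
  show prismRot n (prismVertex n k ε) ∈ convexHull ℝ (prismVerts n)
  have hull := convex_convexHull ℝ (prismVerts n)
  have hvert : ∀ j : ℤ, ∀ δ : ℝ, (δ = 1 ∨ δ = -1) →
      prismVertex n j δ ∈ convexHull ℝ (prismVerts n) := fun j δ hδ =>
    subset_convexHull ℝ _ ((mem_prismVerts_iff hn).2 ⟨j, δ, hδ, rfl⟩)
  have hmid : ∀ δ : ℝ, (δ = 1 ∨ δ = -1) →
      ![-sin (k * π / n) * cos (π / (2 * n)), cos (k * π / n) * cos (π / (2 * n)), δ] ∈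
        convexHull ℝ (prismVerts n) := fun δ hδ => by
    rw [← midpoint_prismVertex hm]
    exact hull (hvert (k + m) δ hδ) (hvert (k + m + 1) δ hδ) (by norm_num) (by norm_num)
      (by norm_num)
  -- the height `ε sin φ` is a convex combination of the heights `1` and `-1`
  have hs := abs_le.1 (abs_sin_le_one (π / (2 * n)))
  have hw : 0 ≤ (1 + ε * sin (π / (2 * n))) / 2 ∧ 0 ≤ (1 - ε * sin (π / (2 * n))) / 2 := by
    rcases hε with rfl | rfl <;> constructor <;> linarith [hs.1, hs.2]
  convert hull (hmid 1 (Or.inl rfl)) (hmid (-1) (Or.inr rfl)) hw.1 hw.2 (by ring) using 1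
  ext i
  fin_cases i <;> simp [prismRot_prismVertex] <;> ring

theorem abs_apply_prismRot_le {n : ℕ} (hn : n ≠ 0) {g : (Fin 3 → ℝ) →ₗ[ℝ] ℝ}
    (hg : ∀ v ∈ prismVerts n, |g v| ≤ 1) {p : Fin 3 → ℝ} (hp : p ∈ prismVerts n) (hgp : g p = 1) :
    |g (prismRot n p)| ≤ sin (π / (2 * n)) := by
  obtain ⟨k, ε, hε, rfl⟩ := (mem_prismVerts_iff hn).1 hp
  set φ := π / (2 * n)
  have hg_apply : ∀ q : Fin 3 → ℝ,
      g q = q 0 * g (Pi.single 0 1) + q 1 * g (Pi.single 1 1) + q 2 * g (Pi.single 2 1) := by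
    intro q
    have hq : q = q 0 • Pi.single 0 1 + q 1 • Pi.single 1 1 + q 2 • Pi.single 2 1 := by
      ext i; fin_cases i <;> simp
    conv_lhs => rw [hq]
    simp only [map_add, map_smul, smul_eq_mul]
  set α := g (Pi.single 0 1)
  set β := g (Pi.single 1 1)
  set γ := g (Pi.single 2 1)
  have hplanar : ∀ j : ℤ, |cos (j * π / n) * α + sin (j * π / n) * β| + |γ| ≤ 1 := fun j => by
    have hv := fun δ hδ => hg _ ((mem_prismVerts_iff hn).2 ⟨j, δ, hδ, rfl⟩)
    refine abs_add_abs_le_one ?_ ?_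
    · simpa [hg_apply, prismVertex] using hv 1 (Or.inl rfl)
    · simpa [hg_apply, prismVertex, sub_eq_add_neg] using hv (-1) (Or.inr rfl)
  have hstep : ∀ j : ℤ, ((j + 1 : ℤ) : ℝ) * π / n = j * π / n + 2 * φ ∧
      ((j - 1 : ℤ) : ℝ) * π / n = j * π / n - 2 * φ := fun j => by
    constructor <;> (push_cast; simp only [φ]; field_simp)
  have hφ : 0 < φ := by positivity
  have hφ' : φ ≤ π / 2 := by
    have : (1 : ℝ) ≤ n := by exact_mod_cast Nat.one_le_iff_ne_zero.2 hn
    rw [div_le_div_iff₀ (by positivity) two_pos]; nlinarith [pi_pos]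
  have hnext := hplanar (k + 1)
  have hprev := hplanar (k - 1)
  rw [(hstep k).1, cos_add, sin_add] at hnext
  rw [(hstep k).2, cos_sub, sin_sub] at hprev
  have key := abs_mul_cos_add_mul_sin_le (u := cos (k * π / n) * α + sin (k * π / n) * β)
    (w := cos (k * π / n) * β - sin (k * π / n) * α) hφ hφ' hε (hplanar k)
    (by rw [← hgp, hg_apply]; simp [prismVertex]; ring) (by convert hnext using 3; ring)
    (by convert hprev using 3; ring)
  convert key using 2
  simp [hg_apply, prismRot_prismVertex]
  ring

theorem abs_apply_two_le_one_of_mem_prismVerts {n : ℕ} {q : Fin 3 → ℝ}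
    (hq : q ∈ prismVerts n) : |q 2| ≤ 1 := by
  obtain ⟨j, rfl | rfl⟩ := hq <;> simp

theorem abs_apply_one_le_cos_of_mem_prismVerts {n : ℕ} (hodd : Odd n) {q : Fin 3 → ℝ}
    (hq : q ∈ prismVerts n) : |q 1| ≤ cos (π / (2 * n)) := by
  obtain ⟨j, rfl | rfl⟩ := hq <;>
    simpa using abs_sin_le_cos_pi_div_two_mul hodd j

theorem LinearMap.ext_of_eq_on_three {M : Type*} [AddCommGroup M] [Module ℝ M]
    {L L' : (Fin 3 → ℝ) →ₗ[ℝ] M} {c s : ℝ} (hs : s ≠ 0)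
    (h₁ : L ![1, 0, 1] = L' ![1, 0, 1]) (h₂ : L ![-1, 0, 1] = L' ![-1, 0, 1])
    (h₃ : L ![c, s, 1] = L' ![c, s, 1]) : L = L' := by
  refine LinearMap.ext fun p => ?_
  set t := p 1 / s
  have hp : p = ((p 2 - t + (p 0 - t * c)) / 2) • ![1, 0, 1] +
      ((p 2 - t - (p 0 - t * c)) / 2) • ![-1, 0, 1] + t • ![c, s, 1] := by
    ext i; fin_cases i <;> simp [t] <;> field_simp <;> ring
  rw [hp]
  simp only [map_add, map_smul, h₁, h₂, h₃]

theorem eq_prismRot_of_apply_prismVertex {n : ℕ} (hn : 2 ≤ n)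
    {L : (Fin 3 → ℝ) →ₗ[ℝ] (Fin 3 → ℝ)}
    (hL : ∀ j : ℕ, j < 2 * n → L (prismVertex n j 1) = prismRot n (prismVertex n j 1)) :
    L = prismRot n := by
  have hn' : (n : ℝ) ≠ 0 := by positivity
  have hs : sin (π / n) ≠ 0 := (sin_pos_of_pos_of_lt_pi (by positivity)
    (div_lt_self pi_pos (by exact_mod_cast hn))).ne'
  refine LinearMap.ext_of_eq_on_three (c := cos (π / n)) hs ?_ ?_ ?_
  · simpa [prismVertex] using hL 0 (by omega)
  · simpa [prismVertex, hn'] using hL n (by omega)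
  · simpa [prismVertex] using hL 1 (by omega)

section PrismNormedSpace

variable {X : Type*} [NormedAddCommGroup X] [NormedSpace ℝ X] {n : ℕ}
  {e : X ≃ₗ[ℝ] (Fin 3 → ℝ)} {T : X →L[ℝ] X}

theorem closedBall_eq_convexHull_image_symm
    (hball : closedBall (0 : X) 1 = e ⁻¹' convexHull ℝ (prismVerts n)) :
    closedBall (0 : X) 1 = convexHull ℝ (e.symm '' prismVerts n) := by
  rw [hball, ← e.image_symm_eq_preimage]
  exact e.symm.toLinearMap.image_convexHull _

theorem norm_symm_le_one_iff (hball : closedBall (0 : X) 1 = e ⁻¹' convexHull ℝ (prismVerts n))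
    (q : Fin 3 → ℝ) : ‖e.symm q‖ ≤ 1 ↔ q ∈ convexHull ℝ (prismVerts n) := by
  rw [← mem_closedBall_zero_iff, hball, mem_preimage, LinearEquiv.apply_symm_apply]

theorem opNorm_le_one_of_forall_prismVerts
    (hball : closedBall (0 : X) 1 = e ⁻¹' convexHull ℝ (prismVerts n)) {f : X →L[ℝ] ℝ}
    (hf : ∀ q ∈ prismVerts n, |f (e.symm q)| ≤ 1) : ‖f‖ ≤ 1 :=
  f.opNorm_le_one_of_closedBall_eq_convexHull (closedBall_eq_convexHull_image_symm hball)
    (by rintro _ ⟨q, hq, rfl⟩; simpa using hf q hq)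

theorem opNorm_eq_one_of_conj_prismRot (hodd : Odd n) (hn : 1 < n)
    (hball : closedBall (0 : X) 1 = e ⁻¹' convexHull ℝ (prismVerts n))
    (hTe : ∀ p, T (e.symm p) = e.symm (prismRot n p)) : ‖T‖ = 1 := by
  have : FiniteDimensional ℝ X := e.symm.finiteDimensional
  have hunit := norm_symm_le_one_iff hball
  refine le_antisymm (T.opNorm_le_one_of_closedBall_eq_convexHull
    (closedBall_eq_convexHull_image_symm hball) ?_) ?_
  · rintro _ ⟨q, hq, rfl⟩
    rw [hTe, hunit]
    exact prismRot_mapsTo_convexHull hodd (subset_convexHull ℝ _ hq)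
  have hc : 0 < cos (π / (2 * n)) := by
    refine cos_pos_of_mem_Ioo ⟨by linarith [pi_pos, (by positivity : 0 < π / (2 * n))], ?_⟩
    exact div_lt_div_of_pos_left pi_pos two_pos (by norm_cast; omega)
  let f : X →L[ℝ] ℝ := (cos (π / (2 * n)))⁻¹ •
    LinearMap.toContinuousLinearMap (LinearMap.proj 1 ∘ₗ e.toLinearMap)
  have hf : ∀ q, f (e.symm q) = (cos (π / (2 * n)))⁻¹ * q 1 := fun q => by simp [f]
  refine T.one_le_opNorm_of_apply_eq_one (x := e.symm (prismVertex n 0 1)) (f := f)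
    ((hunit _).2 (subset_convexHull ℝ _ ((mem_prismVerts_iff (by omega)).2 ⟨0, 1, by simp⟩)))
    (opNorm_le_one_of_forall_prismVerts hball fun q hq => ?_) ?_
  · rw [hf, abs_mul, abs_inv, abs_of_pos hc, inv_mul_le_one₀ hc]
    exact abs_apply_one_le_cos_of_mem_prismVerts hodd hq
  · simp [hTe, hf, prismRot_prismVertex, hc.ne']

theorem nrad_eq_sin_of_conj_prismRot (hn : n ≠ 0)
    (hball : closedBall (0 : X) 1 = e ⁻¹' convexHull ℝ (prismVerts n))
    (hTe : ∀ p, T (e.symm p) = e.symm (prismRot n p)) : nrad T = sin (π / (2 * n)) := by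
  have : FiniteDimensional ℝ X := e.symm.finiteDimensional
  have hunit := norm_symm_le_one_iff hball
  let f : X →L[ℝ] ℝ := LinearMap.toContinuousLinearMap (LinearMap.proj 2 ∘ₗ e.toLinearMap)
  have hf : ∀ q, f (e.symm q) = q 2 := fun q => by simp [f]
  have hx : ‖e.symm (prismVertex n 0 1)‖ ≤ 1 :=
    (hunit _).2 (subset_convexHull ℝ _ ((mem_prismVerts_iff hn).2 ⟨0, 1, by simp⟩))
  have hfx : f (e.symm (prismVertex n 0 1)) = 1 := by simp [hf, prismVertex]
  obtain ⟨hx1, hf1⟩ := norm_eq_one_of_apply_eq_one hx (opNorm_le_one_of_forall_prismVerts hball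
    fun q hq => by rw [hf]; exact abs_apply_two_le_one_of_mem_prismVerts hq) hfx
  refine IsGreatest.csSup_eq ⟨⟨_, f, hx1, hf1, hfx, ?_⟩, ?_⟩
  · have hs : 0 < sin (π / (2 * n)) := sin_pos_of_pos_of_lt_pi (by positivity)
      (div_lt_self pi_pos (by norm_cast; omega))
    simp [hTe, hf, prismRot_prismVertex, abs_of_pos hs]
  rintro _ ⟨y, g, hy, hg, hgy, rfl⟩
  refine abs_apply_le_of_closedBall_eq_convexHull (closedBall_eq_convexHull_image_symm hball)
    ?_ hy.le hg.le hgy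
  rintro _ ⟨q, hq, rfl⟩ g hg hgq
  rw [hTe]
  exact abs_apply_prismRot_le hn (g := (g : X →ₗ[ℝ] ℝ) ∘ₗ e.symm.toLinearMap)
    (fun p hp => by
      simpa using g.le_of_opNorm_le_of_le hg ((hunit p).2 (subset_convexHull ℝ _ hp)))
    hq hgq

end PrismNormedSpace

theorem stmt_19_general {X : Type*} [NormedAddCommGroup X] [NormedSpace ℝ X]
    (n : ℕ) (hodd : Odd n)
    (e : X ≃ₗ[ℝ] (Fin 3 → ℝ))
    (hball : closedBall (0 : X) 1 = e ⁻¹' (convexHull ℝ (prismVerts n)))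
    (T : X →L[ℝ] X)
    (hT : ∀ j : Fin (2 * n),
      e (T (e.symm ![Real.cos (j * π / n), Real.sin (j * π / n), 1])) =
        ![-Real.sin (j * π / n) * Real.cos (π / (2 * n)),
          Real.cos (j * π / n) * Real.cos (π / (2 * n)),
          Real.sin (π / (2 * n))]) :
    ‖T‖ = 1 ∧ nrad T = Real.sin (π / (2 * n)) := by
  obtain rfl | hn1 := eq_or_ne n 1
  · exact absurd hball (closedBall_ne_preimage_convexHull_prismVerts_one e)
  have hn : 1 < n := lt_of_le_of_ne hodd.pos hn1.symm
  have hTe : ∀ p, T (e.symm p) = e.symm (prismRot n p) := fun p => by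
    have hL := eq_prismRot_of_apply_prismVertex hn
      (L := e.toLinearMap ∘ₗ (T : X →ₗ[ℝ] X) ∘ₗ e.symm.toLinearMap)
      fun j hj => by rw [prismRot_prismVertex]; simpa [prismVertex] using hT ⟨j, hj⟩
    rw [← hL]; simp
  exact ⟨opNorm_eq_one_of_conj_prismRot hodd hn hball hTe,
    nrad_eq_sin_of_conj_prismRot (by omega) hball hTe⟩

theorem stmt_19 {X : Type*} [NormedAddCommGroup X] [NormedSpace ℝ X]
    (n : ℕ) (hn : 1 ≤ n) (hodd : Odd n)
    (e : X ≃ₗ[ℝ] (Fin 3 → ℝ))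
    (hball : closedBall (0 : X) 1 = e ⁻¹' (convexHull ℝ (prismVerts n)))
    (T : X →L[ℝ] X)
    (hT : ∀ j : Fin (2 * n),
      e (T (e.symm ![Real.cos (j * π / n), Real.sin (j * π / n), 1])) =
        ![-Real.sin (j * π / n) * Real.cos (π / (2 * n)),
          Real.cos (j * π / n) * Real.cos (π / (2 * n)),
          Real.sin (π / (2 * n))]) :
    ‖T‖ = 1 ∧ nrad T = Real.sin (π / (2 * n)) :=
  stmt_19_general n hodd e hball T hT
end
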